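/- arXiv:1304.7480 — 3 statements merged into one kernel-verified Lean document; each statement's English description precedes it below -/
import Mathlib

section
/- For all real s ≥ 2 and x ≥ 0, the upper incomplete Gamma function satisfies Γ(s, x) ≥ e^{-x} (1 + x)^{s-1}. -/
open MeasureTheory

/-- The upper incomplete Gamma function `Γ(s, x) = ∫_x^∞ t^{s-1} e^{-t} dt`. -/
noncomputable def uGamma (s x : ℝ) : ℝ := ∫ t in Set.Ioi x, t ^ (s - 1) * Real.exp (-t)

open Real Set in
private lemma integrableOn_rpow_mul_exp_neg {s x : ℝ} (hs : 0 < s) (hx : 0 ≤ x) :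
    IntegrableOn (fun t : ℝ => t ^ (s - 1) * Real.exp (-t)) (Set.Ioi x) := by
  have h := (Real.GammaIntegral_convergent hs).mono_set
    (Set.Ioi_subset_Ioi hx)
  exact h.congr_fun (fun t _ => mul_comm _ _) measurableSet_Ioi

open Real Set in
private lemma integral_id_mul_exp_neg (x : ℝ) (hx : 0 ≤ x) :
    ∫ t in Set.Ioi x, t * Real.exp (-t) = (x + 1) * Real.exp (-x) := by
  have hint : IntegrableOn (fun t : ℝ => t * Real.exp (-t)) (Set.Ioi x) := by
    have := integrableOn_rpow_mul_exp_neg (s := 2) two_pos hx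
    refine this.congr_fun (fun t ht => ?_) measurableSet_Ioi
    have ht0 : 0 ≤ t := le_of_lt (lt_of_le_of_lt hx ht)
    beta_reduce
    rw [show (2 : ℝ) - 1 = 1 by norm_num, Real.rpow_one]
  have hderiv : ∀ t ∈ Set.Ici x, HasDerivAt (fun t : ℝ => -((t + 1) * Real.exp (-t)))
      (t * Real.exp (-t)) t := by
    intro t _
    have h1 : HasDerivAt (fun t : ℝ => (t + 1) * Real.exp (-t))
        (1 * Real.exp (-t) + (t + 1) * (Real.exp (-t) * (-1))) t := by
      exact ((hasDerivAt_id t).add_const 1).mul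
        ((Real.hasDerivAt_exp (-t)).comp t ((hasDerivAt_id t).neg))
    have := h1.fun_neg
    refine this.congr_deriv ?_
    ring
  have htend : Filter.Tendsto (fun t : ℝ => -((t + 1) * Real.exp (-t)))
      Filter.atTop (nhds 0) := by
    have h1 : Filter.Tendsto (fun t : ℝ => t ^ 1 * Real.exp (-t)) Filter.atTop (nhds 0) :=
      Real.tendsto_pow_mul_exp_neg_atTop_nhds_zero 1
    have h2 : Filter.Tendsto (fun t : ℝ => Real.exp (-t)) Filter.atTop (nhds 0) := by
      simpa using Real.tendsto_exp_neg_atTop_nhds_zero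
    have := (h1.add h2).neg
    simp only [pow_one, neg_zero, add_zero] at this
    convert this using 2 with t
    ring
  have := integral_Ioi_of_hasDerivAt_of_tendsto' hderiv hint htend
  rw [this]; ring

/-- For all real `s ≥ 2` and `x ≥ 0`, `Γ(s, x) ≥ e^{-x} (1 + x)^{s-1}`. -/
theorem uGamma_ge_exp_mul_pow (s x : ℝ) (hs : 2 ≤ s) (hx : 0 ≤ x) :
    Real.exp (-x) * (1 + x) ^ (s - 1) ≤ uGamma s x := by
  set a : ℝ := 1 + x with ha
  have ha0 : (0 : ℝ) < a := by positivity
  set c : ℝ := (s - 1) * a ^ (s - 2) with hc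
  -- tangent line inequality: for t > x, a^(s-1) + c*(t-a) ≤ t^(s-1)
  have key : ∀ t ∈ Set.Ioi x, a ^ (s - 1) + c * (t - a) ≤ t ^ (s - 1) := by
    intro t ht
    have ht0 : 0 ≤ t := le_of_lt (lt_of_le_of_lt hx ht)
    set u : ℝ := t / a - 1 with hu
    have hu1 : -1 ≤ u := by
      rw [hu]; have : 0 ≤ t / a := div_nonneg ht0 ha0.le; linarith
    have hp : (1 : ℝ) ≤ s - 1 := by linarith
    have hb := one_add_mul_self_le_rpow_one_add hu1 hp
    have h1u : 1 + u = t / a := by rw [hu]; ring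
    rw [h1u] at hb
    have htdiv : (t / a) ^ (s - 1) = t ^ (s - 1) / a ^ (s - 1) :=
      Real.div_rpow ht0 ha0.le (s - 1)
    rw [htdiv] at hb
    have hb2 : (1 + (s - 1) * u) * a ^ (s - 1) ≤ t ^ (s - 1) := by
      rw [← le_div_iff₀ (Real.rpow_pos_of_pos ha0 _)]
      exact hb
    calc a ^ (s - 1) + c * (t - a) = (1 + (s - 1) * u) * a ^ (s - 1) := by
          rw [hc, hu]
          have h2 : a ^ (s - 2) * a = a ^ (s - 1) := by
            rw [← Real.rpow_add_one ha0.ne' (s - 2)]; ring_nf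
          have h3 : a ^ (s - 2) * a ^ (s-1) / a ^ (s-1) = a ^ (s-2) := by
            field_simp
          have h4 : (t / a - 1) * a ^ (s - 1) = (t - a) * a ^ (s - 2) := by
            field_simp
            rw [← h2]; ring
          nlinarith [h4]
      _ ≤ t ^ (s - 1) := hb2
  -- integrability
  have hs0 : (0 : ℝ) < s := by linarith
  have hint : IntegrableOn (fun t : ℝ => t ^ (s - 1) * Real.exp (-t)) (Set.Ioi x) :=
    integrableOn_rpow_mul_exp_neg hs0 hx
  have hintexp : IntegrableOn (fun t : ℝ => Real.exp (-t)) (Set.Ioi x) :=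
    (Real.GammaIntegral_convergent one_pos).mono_set (Set.Ioi_subset_Ioi hx) |>.congr_fun (fun t _ => by simp) measurableSet_Ioi
  have hintid : IntegrableOn (fun t : ℝ => t * Real.exp (-t)) (Set.Ioi x) := by
    have := integrableOn_rpow_mul_exp_neg (s := 2) two_pos hx
    refine this.congr_fun (fun t ht => ?_) measurableSet_Ioi
    beta_reduce
    rw [show (2 : ℝ) - 1 = 1 by norm_num, Real.rpow_one]
  have hintg : IntegrableOn (fun t : ℝ => (a ^ (s - 1) + c * (t - a)) * Real.exp (-t))
      (Set.Ioi x) := by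
    have : (fun t : ℝ => (a ^ (s - 1) + c * (t - a)) * Real.exp (-t))
        = fun t : ℝ => (a ^ (s - 1) - c * a) * Real.exp (-t) + c * (t * Real.exp (-t)) := by
      funext t; ring
    rw [this]
    exact (hintexp.const_mul _).add (hintid.const_mul c)
  -- comparison
  have hmono : ∫ t in Set.Ioi x, (a ^ (s - 1) + c * (t - a)) * Real.exp (-t)
      ≤ ∫ t in Set.Ioi x, t ^ (s - 1) * Real.exp (-t) := by
    refine setIntegral_mono_on hintg hint measurableSet_Ioi (fun t ht => ?_)
    exact mul_le_mul_of_nonneg_right (key t ht) (Real.exp_pos _).le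
  -- compute left integral
  have hcomp : ∫ t in Set.Ioi x, (a ^ (s - 1) + c * (t - a)) * Real.exp (-t)
      = Real.exp (-x) * a ^ (s - 1) := by
    have heq : (fun t : ℝ => (a ^ (s - 1) + c * (t - a)) * Real.exp (-t))
        = fun t : ℝ => (a ^ (s - 1) - c * a) * Real.exp (-t) + c * (t * Real.exp (-t)) := by
      funext t; ring
    rw [heq, integral_add ((hintexp.const_mul _)) (hintid.const_mul c),
      integral_const_mul, integral_const_mul, integral_exp_neg_Ioi,
      integral_id_mul_exp_neg x hx, ha]
    ring
  rw [uGamma, ← hcomp]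
  exact hmono
end

section
/- For any integer r ≥ 2 and any real u > 0, P > 0, the following identity holds: (r-1) ∫_0^1 (1-α)^{r-2} log(1 + P u α) dα = ((1 + P u)/(P u))^{r-1} log(1 + P u) − Σ_{i=0}^{r-2} ((1 + P u)/(P u))^i · 1/(r-1-i). -/
open Finset intervalIntegral

lemma hasDerivAt_aux (n : ℕ) (c : ℝ) (hc : 0 < c) (x : ℝ) (hx : 0 ≤ x) :
    HasDerivAt (fun y : ℝ =>
        (((1+c)/c)^(n+1) - (1-y)^(n+1)) * Real.log (1+c*y)
        + ∑ i ∈ Finset.range (n+1), ((1+c)/c)^i / ((n+1-i : ℕ) : ℝ) * (1-y)^(n+1-i))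
      (((n:ℝ)+1) * ((1-x)^n * Real.log (1+c*x))) x := by
  set A := (1+c)/c with hA
  have hpos : 0 < 1 + c*x := by nlinarith
  have h1 : HasDerivAt (fun y : ℝ => 1 - y) (-1) x := (hasDerivAt_id x).const_sub 1
  have h2 : HasDerivAt (fun y : ℝ => A^(n+1) - (1-y)^(n+1)) (((n:ℝ)+1) * (1-x)^n) x := by
    have := (h1.pow (n+1)).const_sub (A^(n+1))
    refine this.congr_deriv (Eq.symm ?_)
    push_cast [Nat.add_sub_cancel]
    ring
  have hlin : HasDerivAt (fun y : ℝ => 1 + c*y) c x := by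
    simpa using ((hasDerivAt_id x).const_mul c).const_add 1
  have h3 : HasDerivAt (fun y : ℝ => Real.log (1+c*y)) (c/(1+c*x)) x := hlin.log (ne_of_gt hpos)
  have h4 := h2.mul h3
  have h5 : HasDerivAt
      (fun y : ℝ => ∑ i ∈ Finset.range (n+1), A^i / ((n+1-i : ℕ) : ℝ) * (1-y)^(n+1-i))
      (∑ i ∈ Finset.range (n+1), -(A^i * (1-x)^(n-i))) x := by
    apply HasDerivAt.fun_sum
    intro i hi
    have hi' : i < n + 1 := Finset.mem_range.mp hi
    have hne : ((n+1-i : ℕ) : ℝ) ≠ 0 := by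
      have : 0 < n + 1 - i := by omega
      positivity
    have := (h1.pow (n+1-i)).const_mul (A^i / ((n+1-i : ℕ) : ℝ))
    refine this.congr_deriv (Eq.symm ?_)
    have he : n + 1 - i - 1 = n - i := by omega
    rw [he]
    field_simp
  have key : (A^(n+1) - (1-x)^(n+1)) * (c/(1+c*x))
      = ∑ i ∈ Finset.range (n+1), A^i * (1-x)^(n-i) := by
    have hg := geom_sum₂_mul A (1-x) (n+1)
    simp only [Nat.add_sub_cancel] at hg
    have hA1 : A - (1-x) = (1+c*x)/c := by
      rw [hA]; field_simp; ring
    rw [← hg, hA1]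
    field_simp
  have := h4.add h5
  refine this.congr_deriv (Eq.symm ?_)
  rw [Finset.sum_neg_distrib, ← key]
  ring


/-- For any integer `r ≥ 2` and reals `u, P > 0`,
`(r-1) ∫_0^1 (1-α)^{r-2} log(1 + P u α) dα
  = ((1+Pu)/(Pu))^{r-1} log(1+Pu) − Σ_{i=0}^{r-2} ((1+Pu)/(Pu))^i / (r-1-i)`. -/
theorem integral_log_one_add_mul_eq (r : ℕ) (hr : 2 ≤ r) (u P : ℝ) (hu : 0 < u) (hP : 0 < P) :
    ((r : ℝ) - 1) * ∫ α in (0:ℝ)..1, (1 - α) ^ (r - 2) * Real.log (1 + P * u * α)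
      = ((1 + P * u) / (P * u)) ^ (r - 1) * Real.log (1 + P * u)
        - ∑ i ∈ Finset.range (r - 1), ((1 + P * u) / (P * u)) ^ i * (1 / ((r : ℝ) - 1 - i)) := by
  obtain ⟨n, rfl⟩ : ∃ n, r = n + 2 := ⟨r - 2, by omega⟩
  have hc : 0 < P * u := mul_pos hP hu
  set c := P * u with hcdef
  set A := (1+c)/c with hA
  have hr2 : n + 2 - 2 = n := by omega
  have hr1 : n + 2 - 1 = n + 1 := by omega
  rw [hr2, hr1]
  have hcast : ((n+2 : ℕ) : ℝ) - 1 = (n:ℝ) + 1 := by push_cast; ring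
  rw [hcast]
  have hcont : IntervalIntegrable
      (fun α : ℝ => ((n:ℝ)+1) * ((1-α)^n * Real.log (1+c*α)))
      MeasureTheory.volume 0 1 := by
    apply ContinuousOn.intervalIntegrable
    apply ContinuousOn.mul continuousOn_const
    apply ContinuousOn.mul (by fun_prop)
    apply ContinuousOn.log (by fun_prop)
    intro x hx
    rw [Set.uIcc_of_le (by norm_num : (0:ℝ) ≤ 1)] at hx
    nlinarith [hx.1]
  have hint := intervalIntegral.integral_eq_sub_of_hasDerivAt
    (f := fun y : ℝ => (A^(n+1) - (1-y)^(n+1)) * Real.log (1+c*y)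
        + ∑ i ∈ Finset.range (n+1), A^i / ((n+1-i : ℕ) : ℝ) * (1-y)^(n+1-i))
    (a := (0:ℝ)) (b := 1)
    (fun x hx => by
      rw [Set.uIcc_of_le (by norm_num : (0:ℝ) ≤ 1)] at hx
      exact hasDerivAt_aux n c hc x hx.1)
    hcont
  beta_reduce at hint
  rw [intervalIntegral.integral_const_mul] at hint
  rw [hint]
  have hz1 : ∀ i ∈ Finset.range (n+1), A^i / ((n+1-i : ℕ) : ℝ) * (1-(1:ℝ))^(n+1-i) = 0 := by
    intro i hi
    have : n + 1 - i ≠ 0 := by have := Finset.mem_range.mp hi; omega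
    simp [zero_pow this]
  rw [Finset.sum_eq_zero hz1]
  have hsum : ∑ i ∈ Finset.range (n+1), A^i / ((n+1-i : ℕ) : ℝ) * (1-(0:ℝ))^(n+1-i)
      = ∑ i ∈ Finset.range (n+1), A^i * (1 / ((n:ℝ) + 1 - i)) := by
    apply Finset.sum_congr rfl
    intro i hi
    have hi' : i < n + 1 := Finset.mem_range.mp hi
    have : ((n+1-i : ℕ) : ℝ) = (n:ℝ) + 1 - i := by
      push_cast [Nat.cast_sub (by omega : i ≤ n+1)]
      ring
    rw [this]
    simp [div_eq_mul_inv, one_div]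
  rw [hsum]
  simp [Real.log_one]
end

section
/- For a Hermitian positive definite r×r matrix A with smallest eigenvalue λ_min(A) and denoting t1 = tr(A), t2 = tr(A†A), the trace of the inverse satisfies tr(A^{-1}) ≤ (r t1 + r t2 − t1² − r²·λ_min(A)) / (λ_min(A)(t2 − t1 λ_min(A))) in the specialized form: when λ_min(A) = 1, tr(A^{-1}) ≤ r − (t1 − r)² / (t2 − t1). Equivalently, writing A = B + I with B ⪰ 0, B ≠ 0: tr((B+I)^{-1}) ≤ r − tr(B)² / (tr(B²) + tr(B)). -/
open Matrix ComplexOrder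

-- scalar lemma
lemma key_scalar {ι : Type*} (s : Finset ι) (a : ι → ℝ) (ha : ∀ i ∈ s, 0 ≤ a i)
    (hpos : 0 < ∑ i ∈ s, a i) :
    ∑ i ∈ s, (1 + a i)⁻¹ ≤ s.card - (∑ i ∈ s, a i) ^ 2 / (∑ i ∈ s, (a i)^2 + ∑ i ∈ s, a i) := by
  have h1 : ∀ i ∈ s, 0 < 1 + a i := fun i hi => by linarith [ha i hi]
  have hden : 0 < ∑ i ∈ s, (a i)^2 + ∑ i ∈ s, a i := by
    have : 0 ≤ ∑ i ∈ s, (a i)^2 := Finset.sum_nonneg fun i _ => sq_nonneg _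
    linarith
  have hsplit : ∑ i ∈ s, (1 + a i)⁻¹ = s.card - ∑ i ∈ s, a i / (1 + a i) := by
    rw [eq_sub_iff_add_eq, ← Finset.sum_add_distrib]
    rw [Finset.sum_congr rfl fun i hi => ?_, Finset.sum_const, nsmul_eq_mul, mul_one]
    field_simp [(h1 i hi).ne']
  rw [hsplit]
  have hCS : (∑ i ∈ s, a i) ^ 2 ≤ (∑ i ∈ s, a i / (1 + a i)) * (∑ i ∈ s, (a i)^2 + ∑ i ∈ s, a i) := by
    have := Finset.sum_mul_sq_le_sq_mul_sq s (fun i => Real.sqrt (a i / (1 + a i)))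
      (fun i => Real.sqrt (a i * (1 + a i)))
    have e1 : ∀ i ∈ s, Real.sqrt (a i / (1 + a i)) * Real.sqrt (a i * (1 + a i)) = a i := by
      intro i hi
      rw [← Real.sqrt_mul (div_nonneg (ha i hi) (h1 i hi).le)]
      have : a i / (1 + a i) * (a i * (1 + a i)) = (a i)^2 := by
        field_simp [(h1 i hi).ne']
      rw [this, Real.sqrt_sq (ha i hi)]
    have e2 : ∀ i ∈ s, Real.sqrt (a i / (1 + a i)) ^ 2 = a i / (1 + a i) := fun i hi =>
      Real.sq_sqrt (div_nonneg (ha i hi) (h1 i hi).le)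
    have e3 : ∀ i ∈ s, Real.sqrt (a i * (1 + a i)) ^ 2 = (a i)^2 + a i := by
      intro i hi
      rw [Real.sq_sqrt (mul_nonneg (ha i hi) (h1 i hi).le)]; ring
    rw [Finset.sum_congr rfl e1, Finset.sum_congr rfl e2, Finset.sum_congr rfl e3,
      Finset.sum_add_distrib] at this
    exact this
  have hq := (div_le_iff₀ hden).mpr hCS
  linarith

/-- Specialized Bai–Golub trace inequality: for a Hermitian positive definite `r×r` matrix
`A = B + I` with `B ⪰ 0`, `B ≠ 0` (so `λ_min(A) = 1`):
`tr((B+I)^{-1}) ≤ r − tr(B)² / (tr(B²) + tr(B))`. -/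
theorem trace_inverse_bai_golub
    (r : ℕ) (hr : 1 ≤ r) (B : Matrix (Fin r) (Fin r) ℂ)
    (hB : B.PosSemidef) (hB0 : B ≠ 0) :
    ((B + 1)⁻¹).trace.re ≤ r - (B.trace.re) ^ 2 / ((B * B).trace.re + B.trace.re) := by
  have hH := hB.1
  set μ : Fin r → ℝ := hH.eigenvalues with hμ
  have hμ0 : ∀ i, 0 ≤ μ i := hB.eigenvalues_nonneg
  set U : Matrix (Fin r) (Fin r) ℂ := ↑(hH.eigenvectorUnitary) with hU
  have hUU : U * star U = 1 := (Matrix.mem_unitaryGroup_iff).mp (hH.eigenvectorUnitary).2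
  have hUU' : star U * U = 1 := (Matrix.mem_unitaryGroup_iff').mp (hH.eigenvectorUnitary).2
  have cancel : ∀ X : Matrix (Fin r) (Fin r) ℂ, star U * (U * X) = X := fun X => by
    rw [← mul_assoc, hUU', one_mul]
  set D : Matrix (Fin r) (Fin r) ℂ := diagonal (fun i => (μ i : ℂ)) with hD
  have hspec : B = U * D * star U := hH.spectral_theorem
  have hd1 : ∀ i, ((μ i : ℂ) + 1) ≠ 0 := by
    intro i h
    have : (μ i : ℂ) = -1 := by linear_combination h
    have := congrArg Complex.re this
    simp at this
    linarith [hμ0 i]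
  set C : Matrix (Fin r) (Fin r) ℂ := diagonal (fun i => ((μ i : ℂ) + 1)⁻¹) with hC
  have hDC : (D + 1) * C = 1 := by
    rw [hD, hC, ← diagonal_one, diagonal_add, diagonal_mul_diagonal]
    exact congrArg diagonal (funext fun i => mul_inv_cancel₀ (hd1 i))
  -- B + 1 = U (D+1) U*
  have hB1 : B + 1 = U * (D + 1) * star U := by
    rw [hspec, mul_add, add_mul, mul_one, hUU]
  -- inverse
  have hinv : (B + 1)⁻¹ = U * C * star U := by
    apply Matrix.inv_eq_right_inv
    rw [hB1]
    simp only [mul_assoc]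
    rw [cancel, ← mul_assoc (D + 1) C, hDC, one_mul, hUU]
  have htr_inv : ((B + 1)⁻¹).trace = ∑ i, ((μ i : ℂ) + 1)⁻¹ := by
    rw [hinv, trace_mul_comm, ← mul_assoc, hUU', one_mul, hC, trace_diagonal]
  have htrB : B.trace = ∑ i, (μ i : ℂ) := by
    rw [hspec, trace_mul_comm, ← mul_assoc, hUU', one_mul, hD, trace_diagonal]
  have htrBB : (B * B).trace = ∑ i, (μ i : ℂ)^2 := by
    have hBB : B * B = U * (D * D) * star U := by
      rw [hspec]
      simp only [mul_assoc]
      rw [cancel]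
    rw [hBB, trace_mul_comm, ← mul_assoc, hUU', one_mul, hD, diagonal_mul_diagonal,
      trace_diagonal]
    simp [sq]
  -- sum of eigenvalues positive
  have hsum_pos : 0 < ∑ i, μ i := by
    have hex : ∃ i, μ i ≠ 0 := by
      by_contra h
      push_neg at h
      apply hB0
      rw [hspec, hD]
      have : (fun i => (μ i : ℂ)) = fun _ => (0 : ℂ) := funext fun i => by rw [h i]; simp
      rw [this]
      simp
    obtain ⟨i, hi⟩ := hex
    exact Finset.sum_pos' (fun j _ => hμ0 j)
      ⟨i, Finset.mem_univ i, (hμ0 i).lt_of_ne (Ne.symm hi)⟩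
  have key := key_scalar Finset.univ μ (fun i _ => hμ0 i) hsum_pos
  have hre1 : ((B + 1)⁻¹).trace.re = ∑ i, (1 + μ i)⁻¹ := by
    rw [htr_inv, Complex.re_sum]
    refine Finset.sum_congr rfl fun i _ => ?_
    rw [show ((μ i : ℂ) + 1) = (((1 + μ i : ℝ)) : ℂ) by push_cast; ring,
      ← Complex.ofReal_inv, Complex.ofReal_re]
  have hre2 : B.trace.re = ∑ i, μ i := by
    rw [htrB, Complex.re_sum]; simp
  have hre3 : (B * B).trace.re = ∑ i, (μ i)^2 := by
    rw [htrBB, Complex.re_sum]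
    refine Finset.sum_congr rfl fun i _ => ?_
    rw [← Complex.ofReal_pow, Complex.ofReal_re]
  rw [hre1, hre2, hre3]
  simpa using key
end
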